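/- arXiv:2103.15958 — 2 statements merged into one kernel-verified Lean document; each statement's English description precedes it below -/
import Mathlib

section
/- Let G be a simple directed graph with m edges, and remove each edge independently with probability q = (m−r)/m. Then E[Λ^{1,−}·Λ^{1,+}] = q²·(Σ_i (d_i^{−})²)(Σ_i (d_i^{+})²) + q(1−q)·Σ_{(i,j)∈G} d_i^{+} d_j^{−}, where Λ^{1,+} = Σ_i d_i^{+,(r)} d_i^{+} and Λ^{1,−} = Σ_i d_i^{−,(r)} d_i^{−}. -/
/-!
Each edge lies outside the random set `S` independently with probability `q`, and
`Λ^{1,-} = ∑_{e ∉ S} d^-_{e.2}`, `Λ^{1,+} = ∑_{f ∉ S} d^+_{f.1}`. Expanding the product, the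
expectation is `∑_{e,f} d^-_{e.2} d^+_{f.1} P(e, f ∉ S)`, and this probability is `q ^ 2`
for `e ≠ f` and `q` for `e = f`; the diagonal excess `q (1 - q)` gives the second term, while
`∑_e d^±_{e} = ∑_i (d^±_i) ^ 2` gives the first.
-/

open Finset

lemma sum_card_filter_mul_eq_sum_comp {α ι R : Type*} [Fintype ι] [DecidableEq ι]
    [NonAssocSemiring R] (B : Finset α) (π : α → ι) (D : ι → R) :
    ∑ i, (#{e ∈ B | π e = i} : R) * D i = ∑ e ∈ B, D (π e) := by
  rw [← sum_fiberwise' B π D]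
  simp only [sum_const, nsmul_eq_mul]

section

variable {α R : Type*} [DecidableEq α] [CommRing R] {p q : R}

lemma sum_powerset_sdiff_pow_mul_pow {A T : Finset α} (hT : T ⊆ A) (hpq : p + q = 1) :
    ∑ S ∈ (A \ T).powerset, p ^ #S * q ^ (#A - #S) = q ^ #T := by
  have hcard : #A = #T + #(A \ T) := by
    rw [card_sdiff_of_subset hT]; have := card_le_card hT; omega
  calc ∑ S ∈ (A \ T).powerset, p ^ #S * q ^ (#A - #S)
      = q ^ #T * ∑ S ∈ (A \ T).powerset, p ^ #S * q ^ (#(A \ T) - #S) := by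
        rw [mul_sum]
        refine sum_congr rfl fun S hS => ?_
        rw [hcard, Nat.add_sub_assoc (card_le_card (mem_powerset.mp hS)), pow_add]
        ring
    _ = q ^ #T := by rw [sum_pow_mul_eq_add_pow, hpq, one_pow, mul_one]

lemma sum_powerset_pow_mul_pow_ite_disjoint {A T : Finset α} (hT : T ⊆ A) (hpq : p + q = 1) :
    ∑ S ∈ A.powerset, (if Disjoint S T then p ^ #S * q ^ (#A - #S) else 0) = q ^ #T := by
  rw [← sum_filter, ← sum_powerset_sdiff_pow_mul_pow hT hpq]
  congr 1
  ext S
  simp only [mem_filter, mem_powerset, subset_sdiff]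

lemma sum_sdiff_mul_sum_sdiff (A S : Finset α) (a b : α → R) :
    (∑ e ∈ A \ S, a e) * ∑ f ∈ A \ S, b f =
      ∑ e ∈ A, ∑ f ∈ A, if Disjoint S {e, f} then a e * b f else 0 := by
  simp only [sdiff_eq_filter, sum_filter, sum_mul_sum, disjoint_insert_right,
    disjoint_singleton_right, ite_and]
  refine sum_congr rfl fun e _ => sum_congr rfl fun f _ => ?_
  split_ifs <;> simp

lemma pow_card_pair (e f : α) (q : R) :
    q ^ #{e, f} = q ^ 2 + if e = f then q * (1 - q) else 0 := by
  by_cases hef : e = f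
  · subst hef; simp only [insert_eq_of_mem, mem_singleton, card_singleton, if_true]; ring
  · rw [card_pair hef, if_neg hef, add_zero]

/-- Second moment of `(∑ e ∉ S, a e) (∑ f ∉ S, b f)` when each element of `A` lies in the random
set `S` independently with probability `p`. -/
lemma sum_powerset_pow_mul_pow_mul_sum_sdiff_mul_sum_sdiff (A : Finset α) (a b : α → R)
    (hpq : p + q = 1) :
    ∑ S ∈ A.powerset, p ^ #S * q ^ (#A - #S) * ((∑ e ∈ A \ S, a e) * ∑ f ∈ A \ S, b f) =
      q ^ 2 * (∑ e ∈ A, a e) * (∑ f ∈ A, b f) + q * (1 - q) * ∑ e ∈ A, a e * b e := by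
  have hpair : ∀ e ∈ A, ∀ f ∈ A, ∑ S ∈ A.powerset,
      p ^ #S * q ^ (#A - #S) * (if Disjoint S {e, f} then a e * b f else 0) =
        a e * b f * (q ^ 2 + if e = f then q * (1 - q) else 0) := by
    intro e he f hf
    have hsub : {e, f} ⊆ A := insert_subset he (singleton_subset_iff.mpr hf)
    rw [← pow_card_pair, ← sum_powerset_pow_mul_pow_ite_disjoint hsub hpq, mul_sum]
    refine sum_congr rfl fun S _ => ?_
    split_ifs <;> ring
  calc ∑ S ∈ A.powerset, p ^ #S * q ^ (#A - #S) * ((∑ e ∈ A \ S, a e) * ∑ f ∈ A \ S, b f)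
      = ∑ e ∈ A, ∑ f ∈ A, ∑ S ∈ A.powerset,
          p ^ #S * q ^ (#A - #S) * (if Disjoint S {e, f} then a e * b f else 0) := by
        simp_rw [sum_sdiff_mul_sum_sdiff, mul_sum]
        rw [sum_comm]
        refine sum_congr rfl fun e _ => ?_
        exact sum_comm
    _ = ∑ e ∈ A, ∑ f ∈ A, a e * b f * (q ^ 2 + if e = f then q * (1 - q) else 0) :=
        sum_congr rfl fun e he => sum_congr rfl fun f hf => hpair e he f hf
    _ = _ := by
        simp only [mul_add, mul_ite, mul_zero, sum_add_distrib, sum_ite_eq]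
        rw [sum_congr rfl fun e he => if_pos he, mul_assoc, sum_mul_sum, mul_sum, mul_sum]
        congr 1 <;> refine sum_congr rfl fun e _ => ?_
        · rw [mul_sum]
          exact sum_congr rfl fun f _ => by ring
        · ring

end

theorem expected_lambda_product_general {V : Type*} [Fintype V] [DecidableEq V]
    (G : Finset (V × V)) (m r : ℕ) (q : ℝ)
    (hm : G.card = m) (hmpos : 0 < m)
    (hq : q = ((m : ℝ) - r) / m) :
    ∑ S ∈ G.powerset,
      ((r : ℝ) / m) ^ S.card * (((m : ℝ) - r) / m) ^ (m - S.card) *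
        ((∑ i : V, (((G \ S).filter (fun e => e.2 = i)).card : ℝ) *
            ((G.filter (fun e => e.2 = i)).card : ℝ)) *
          (∑ i : V, (((G \ S).filter (fun e => e.1 = i)).card : ℝ) *
            ((G.filter (fun e => e.1 = i)).card : ℝ))) =
      q ^ 2 * (∑ i : V, ((G.filter (fun e => e.2 = i)).card : ℝ) ^ 2) *
          (∑ i : V, ((G.filter (fun e => e.1 = i)).card : ℝ) ^ 2) +
        q * (1 - q) * ∑ e ∈ G, ((G.filter (fun f => f.1 = e.1)).card : ℝ) *
          ((G.filter (fun f => f.2 = e.2)).card : ℝ) := by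
  subst hm
  have hpq : (r : ℝ) / #G + q = 1 := by
    rw [hq, ← add_div, add_sub_cancel, div_self (Nat.cast_ne_zero.mpr hmpos.ne')]
  have hsq (π : V × V → V) :
      ∑ i, (#{e ∈ G | π e = i} : ℝ) ^ 2 = ∑ e ∈ G, (#{f ∈ G | π f = π e} : ℝ) := by
    simp only [sq, sum_card_filter_mul_eq_sum_comp]
  simp only [← hq, hsq, sum_card_filter_mul_eq_sum_comp]
  rw [sum_powerset_pow_mul_pow_mul_sum_sdiff_mul_sum_sdiff G _ _ hpq]
  congr 2
  exact sum_congr rfl fun e _ => mul_comm _ _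

/-- E[Λ^{1,−}·Λ^{1,+}] = q²(Σ_i (d_i^−)²)(Σ_i (d_i^+)²)
+ q(1−q)·Σ_{(i,j)∈G} d_i^+ d_j^-, where each edge is removed independently with
probability q = (m−r)/m. -/
theorem expected_lambda_product {V : Type*} [Fintype V] [DecidableEq V]
    (G : Finset (V × V)) (m r : ℕ) (q : ℝ)
    (hsimple : ∀ e ∈ G, e.1 ≠ e.2)
    (hm : G.card = m) (hmpos : 0 < m) (hr : r ≤ m)
    (hq : q = ((m : ℝ) - r) / m) :
    ∑ S ∈ G.powerset,
      ((r : ℝ) / m) ^ S.card * (((m : ℝ) - r) / m) ^ (m - S.card) *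
        ((∑ i : V, (((G \ S).filter (fun e => e.2 = i)).card : ℝ) *
            ((G.filter (fun e => e.2 = i)).card : ℝ)) *
          (∑ i : V, (((G \ S).filter (fun e => e.1 = i)).card : ℝ) *
            ((G.filter (fun e => e.1 = i)).card : ℝ))) =
      q ^ 2 * (∑ i : V, ((G.filter (fun e => e.2 = i)).card : ℝ) ^ 2) *
          (∑ i : V, ((G.filter (fun e => e.1 = i)).card : ℝ) ^ 2) +
        q * (1 - q) * ∑ e ∈ G, ((G.filter (fun f => f.1 = e.1)).card : ℝ) *
          ((G.filter (fun f => f.2 = e.2)).card : ℝ) :=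
  expected_lambda_product_general G m r q hm hmpos hq
end

section
/- Let G be a simple directed graph with m edges, where every pair of an unmatched in-stub and unmatched out-stub in a partial matching situation is unsuitable. If at such a failure point there exists a vertex with at least one unmatched in-stub, then the number of vertices possessing at least one unmatched out-stub is at most d_max, and symmetrically the number of vertices with at least one unmatched in-stub is at most d_max. -/
open Finset

/-- at a failure point (every pair of an unmatched in-stub and an
unmatched out-stub is unsuitable), if some vertex still has an unmatched in-stub,
then at most d_max vertices have unmatched out-stubs and at most d_max vertices
have unmatched in-stubs. -/
theorem failure_few_vertices {V : Type*} [Fintype V] [DecidableEq V]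
    (G Er : Finset (V × V)) (dmax : ℕ)
    (hsimple : ∀ e ∈ G, e.1 ≠ e.2)
    (hsub : Er ⊆ G)
    (hdin : ∀ i : V, (G.filter (fun e => e.2 = i)).card ≤ dmax)
    (hdout : ∀ i : V, (G.filter (fun e => e.1 = i)).card ≤ dmax)
    (hfail : ∀ u v : V,
      0 < ((G \ Er).filter (fun e => e.1 = u)).card →
      0 < ((G \ Er).filter (fun e => e.2 = v)).card →
      u = v ∨ (u, v) ∈ Er)
    (hin : ∃ v : V, 0 < ((G \ Er).filter (fun e => e.2 = v)).card) :
    ((univ : Finset V).filter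
        (fun u => 0 < ((G \ Er).filter (fun e => e.1 = u)).card)).card ≤ dmax ∧
    ((univ : Finset V).filter
        (fun v => 0 < ((G \ Er).filter (fun e => e.2 = v)).card)).card ≤ dmax := by
  obtain ⟨v, hv⟩ := hin
  obtain ⟨e, he⟩ := card_pos.mp hv
  simp only [mem_filter, mem_sdiff] at he
  obtain ⟨⟨heG, heEr⟩, hev⟩ := he
  have hu : 0 < ((G \ Er).filter (fun e' => e'.1 = e.1)).card := by
    apply card_pos.mpr
    exact ⟨e, mem_filter.mpr ⟨mem_sdiff.mpr ⟨heG, heEr⟩, rfl⟩⟩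
  constructor
  ·
    have hss : (univ.filter (fun u => 0 < ((G \ Er).filter (fun e' => e'.1 = u)).card)) ⊆
        insert v ((Er.filter (fun e' => e'.2 = v)).image Prod.fst) := by
      intro u hmem
      simp only [mem_filter, mem_univ, true_and] at hmem
      rcases hfail u v hmem hv with h | h
      · exact h ▸ mem_insert_self u _
      · exact mem_insert_of_mem (mem_image.mpr ⟨(u, v), mem_filter.mpr ⟨h, rfl⟩, rfl⟩)
    have hlt : (Er.filter (fun e' => e'.2 = v)).card < (G.filter (fun e' => e'.2 = v)).card := by
      apply card_lt_card
      refine ⟨filter_subset_filter _ hsub, fun hcon => ?_⟩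
      exact heEr (mem_filter.mp (hcon (mem_filter.mpr ⟨heG, hev⟩))).1
    calc _ ≤ (insert v ((Er.filter (fun e' => e'.2 = v)).image Prod.fst)).card :=
            card_le_card hss
      _ ≤ ((Er.filter (fun e' => e'.2 = v)).image Prod.fst).card + 1 := card_insert_le _ _
      _ ≤ (Er.filter (fun e' => e'.2 = v)).card + 1 := by
            exact Nat.add_le_add_right (card_image_le) 1
      _ ≤ (G.filter (fun e' => e'.2 = v)).card := hlt
      _ ≤ dmax := hdin v
  ·
    have hss : (univ.filter (fun w => 0 < ((G \ Er).filter (fun e' => e'.2 = w)).card)) ⊆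
        insert e.1 ((Er.filter (fun e' => e'.1 = e.1)).image Prod.snd) := by
      intro w hmem
      simp only [mem_filter, mem_univ, true_and] at hmem
      rcases hfail e.1 w hu hmem with h | h
      · exact h ▸ mem_insert_self _ _
      · exact mem_insert_of_mem (mem_image.mpr ⟨(e.1, w), mem_filter.mpr ⟨h, rfl⟩, rfl⟩)
    have hlt : (Er.filter (fun e' => e'.1 = e.1)).card < (G.filter (fun e' => e'.1 = e.1)).card := by
      apply card_lt_card
      refine ⟨filter_subset_filter _ hsub, fun hcon => ?_⟩
      exact heEr (mem_filter.mp (hcon (mem_filter.mpr ⟨heG, rfl⟩))).1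
    calc _ ≤ (insert e.1 ((Er.filter (fun e' => e'.1 = e.1)).image Prod.snd)).card :=
            card_le_card hss
      _ ≤ ((Er.filter (fun e' => e'.1 = e.1)).image Prod.snd).card + 1 := card_insert_le _ _
      _ ≤ (Er.filter (fun e' => e'.1 = e.1)).card + 1 := by
            exact Nat.add_le_add_right (card_image_le) 1
      _ ≤ (G.filter (fun e' => e'.1 = e.1)).card := hlt
      _ ≤ dmax := hdout e.1
end
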